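/- Let (X_1,W_1),...,(X_n,W_n) be independent copies of a random vector (X,W) with joint probability density f_{X,W}, where X is a nonnegative continuous random variable. Let φ: [0,∞) → (0,1] be a continuous decreasing function with φ(0) = 1 and lim_{t→∞} φ(t) = 0, and define the time-dependent powers W_i(t) = W_i·φ(t). Fix 1 ≤ r ≤ n. Then for all t ≥ 0 and s ≥ 0, the joint survival function Q(t,s) = P{X_{r:n} > t, W_{[r:n]}(t) > s, W_{[r+1:n]}(t) > s, ..., W_{[n:n]}(t) > s} satisfies Q(t,s) = P{X_{r:n} > t, W_{[r:n]} > s/φ(t), ..., W_{[n:n]} > s/φ(t)} = n·C(n-1,r-1) · ∫_{s/φ(t)}^∞ ∫_t^∞ F_X(x)^{r-1} · [F̄_{X,W}(x, s/φ(t))]^{n-r} · f_{X,W}(x,y) dx dy. -/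

import Mathlib

/-!
Since `φ t > 0`, `W φ(t) > s` iff `W > s / φ(t)`, which gives the first identity. For the
second, the sample `((X_i, W_i))_i` has law `ν^⊗n` with `ν = f dλ`. Ties among the `X_i` are
null because the law of `X` has no atoms, and off the ties the event splits disjointly according
to the index `i` at which `X_{r:n}` is attained and the set `S` of the `r - 1` indices below it.
By Fubini, conditioning on the `i`-th coordinate, each of the `n·C(n-1,r-1)` pieces has
probability `∫_{x > t, y > c} F(x)^(r-1) F̄(x, c)^(n-r) dν(x, y)` with `c = s / φ(t)`.
-/

open MeasureTheory ProbabilityTheory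

open Classical in
/-- The `r`-th order statistic (r = 1, ..., n) of the values `v 0, ..., v (n-1)`:
the smallest `x` such that at least `r` of the values are `≤ x`. -/
noncomputable def orderStat {n : ℕ} (v : Fin n → ℝ) (r : ℕ) : ℝ :=
  sInf {x : ℝ | r ≤ (Finset.univ.filter (fun i => v i ≤ x)).card}

open Finset

section OrderStatistic

variable {N : ℕ}

lemma orderStat_eq_of_card (a : Fin N → ℝ) {r : ℕ} {i : Fin N}
    (hle : #{j | a j ≤ a i} = r) (hlt : #{j | a j < a i} = r - 1) :
    orderStat a r = a i := by
  have hmem : a i ∈ {x : ℝ | r ≤ #{j | a j ≤ x}} := by simp [hle]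
  have hlb : ∀ x ∈ {x : ℝ | r ≤ #{j | a j ≤ x}}, a i ≤ x := by
    intro x hx
    by_contra! hxi
    have := card_le_card (monotone_filter_right univ fun j _ (hj : a j ≤ x) => hj.trans_lt hxi)
    have : 0 < #{j | a j ≤ a i} := card_pos.2 ⟨i, by simp⟩
    simp only [Set.mem_ofPred_eq] at hx
    omega
  exact le_antisymm (csInf_le ⟨a i, hlb⟩ hmem) (le_csInf ⟨a i, hmem⟩ hlb)

lemma card_filter_lt_lt_of_lt {a : Fin N → ℝ} {p q : Fin N} (hpq : a p < a q) :
    #{j | a j < a p} < #{j | a j < a q} :=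
  card_lt_card ((ssubset_iff_of_subset (monotone_filter_right univ fun _ _ h => h.trans hpq)).2
    ⟨p, by simp [hpq]⟩)

lemma card_filter_lt_lt (a : Fin N → ℝ) (i : Fin N) : #{j | a j < a i} < N :=
  (card_lt_card <| filter_ssubset (p := fun j => a j < a i) |>.2 ⟨i, mem_univ i, lt_irrefl _⟩)
    |>.trans_eq (card_fin N)

lemma exists_card_filter_lt_eq {a : Fin N → ℝ} (ha : Function.Injective a) {k : ℕ} (hk : k < N) :
    ∃ i, #{j | a j < a i} = k := by
  let rank : Fin N → Fin N := fun i => ⟨#{j | a j < a i}, card_filter_lt_lt a i⟩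
  have hrank : Function.Injective rank := by
    intro p q hpq
    rw [Fin.ext_iff] at hpq
    rcases lt_trichotomy (a p) (a q) with hlt | heq | hgt
    · exact absurd hpq (card_filter_lt_lt_of_lt hlt).ne
    · exact ha heq
    · exact absurd hpq (card_filter_lt_lt_of_lt hgt).ne'
  obtain ⟨i, hi⟩ := Finite.surjective_of_injective hrank ⟨k, hk⟩
  exact ⟨i, congrArg Fin.val hi⟩

end OrderStatistic

section RankEvent

variable {N : ℕ} {t c : ℝ} {i : Fin N} {S : Finset (Fin N)} {v : Fin N → ℝ × ℝ}

/-- The part of `orderStatEvent (#S + 1) t c` on which the order statistic is attained at `i`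
and `S` is the set of indices whose first coordinate lies below it. -/
def rankEvent (t c : ℝ) (i : Fin N) (S : Finset (Fin N)) : Set (Fin N → ℝ × ℝ) :=
  {v | (t < (v i).1 ∧ c < (v i).2) ∧
    ∀ j ≠ i, if j ∈ S then (v j).1 < (v i).1 else (v i).1 < (v j).1 ∧ c < (v j).2}

def orderStatEvent (r : ℕ) (t c : ℝ) : Set (Fin N → ℝ × ℝ) :=
  {v | t < orderStat (fun j => (v j).1) r ∧
    ∀ j, orderStat (fun k => (v k).1) r ≤ (v j).1 → c < (v j).2}

lemma filter_lt_eq_of_mem_rankEvent (hiS : i ∉ S) (hv : v ∈ rankEvent t c i S) :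
    ({j | (v j).1 < (v i).1} : Finset (Fin N)) = S := by
  ext j
  rcases eq_or_ne j i with rfl | hji
  · simp [hiS]
  have := hv.2 j hji
  split_ifs at this with hjS
  · simp [hjS, this]
  · simp [hjS, this.1.le]

lemma filter_le_eq_of_mem_rankEvent (hiS : i ∉ S) (hv : v ∈ rankEvent t c i S) :
    ({j | (v j).1 ≤ (v i).1} : Finset (Fin N)) = insert i S := by
  ext j
  rcases eq_or_ne j i with rfl | hji
  · simp
  have := hv.2 j hji
  split_ifs at this with hjS
  · simp [hjS, this.le]
  · simp [hjS, hji, this.1]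

lemma orderStat_eq_of_mem_rankEvent (hiS : i ∉ S) (hv : v ∈ rankEvent t c i S) :
    orderStat (fun j => (v j).1) (#S + 1) = (v i).1 :=
  orderStat_eq_of_card _
    (by rw [filter_le_eq_of_mem_rankEvent hiS hv, card_insert_of_notMem hiS])
    (by rw [filter_lt_eq_of_mem_rankEvent hiS hv, Nat.add_sub_cancel])

lemma rankEvent_subset_orderStatEvent (hiS : i ∉ S) :
    rankEvent t c i S ⊆ orderStatEvent (#S + 1) t c := by
  intro v hv
  rw [orderStatEvent, Set.mem_ofPred_eq, orderStat_eq_of_mem_rankEvent hiS hv]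
  refine ⟨hv.1.1, fun j hj => ?_⟩
  rcases eq_or_ne j i with rfl | hji
  · exact hv.1.2
  have := hv.2 j hji
  split_ifs at this
  · exact absurd hj this.not_ge
  · exact this.2

lemma disjoint_rankEvent {i' : Fin N} {S' : Finset (Fin N)} (hiS : i ∉ S) (hiS' : i' ∉ S')
    (hcard : #S = #S') (hne : (i, S) ≠ (i', S')) :
    Disjoint (rankEvent t c i S) (rankEvent t c i' S') := by
  refine Set.disjoint_left.2 fun v hv hv' => hne ?_
  have hS := filter_lt_eq_of_mem_rankEvent hiS hv
  have hS' := filter_lt_eq_of_mem_rankEvent hiS' hv'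
  obtain rfl : i = i' := by
    rcases lt_trichotomy (v i).1 (v i').1 with hlt | heq | hgt
    · exact absurd hcard (by rw [← hS, ← hS']; exact (card_filter_lt_lt_of_lt hlt).ne)
    · by_contra hii'
      have := hv.2 i' (Ne.symm hii')
      split_ifs at this with hi'S
      · exact this.ne' heq
      · exact this.1.ne heq
    · exact absurd hcard (by rw [← hS, ← hS']; exact (card_filter_lt_lt_of_lt hgt).ne')
  rw [← hS, ← hS']

lemma orderStatEvent_subset {r : ℕ} (hr : 1 ≤ r) (hrN : r ≤ N) :
    (orderStatEvent r t c : Set (Fin N → ℝ × ℝ)) ⊆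
      (⋃ i, ⋃ S ∈ powersetCard (r - 1) (univ.erase i), rankEvent t c i S) ∪
        {v | ¬ Function.Injective fun j => (v j).1} := by
  intro v hv
  by_cases hinj : Function.Injective fun j => (v j).1
  swap
  · exact Or.inr hinj
  left
  obtain ⟨i, hi⟩ := exists_card_filter_lt_eq hinj (k := r - 1) (by omega)
  set S : Finset (Fin N) := {j | (v j).1 < (v i).1}
  have hiS : i ∉ S := by simp [S]
  have hle : ({j | (v j).1 ≤ (v i).1} : Finset (Fin N)) = insert i S := by
    ext j
    simp [S, le_iff_lt_or_eq, hinj.eq_iff, or_comm]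
  have hord : orderStat (fun j => (v j).1) r = (v i).1 :=
    orderStat_eq_of_card _ (by rw [hle, card_insert_of_notMem hiS, hi]; omega) hi
  obtain ⟨ht, hc⟩ := hv
  rw [hord] at ht hc
  refine Set.mem_iUnion.2 ⟨i, Set.mem_iUnion₂.2
    ⟨S, mem_powersetCard.2 ⟨fun j hj => ?_, hi⟩, ⟨ht, hc i le_rfl⟩, fun j hji => ?_⟩⟩
  · exact mem_erase.2 ⟨fun h => hiS (h ▸ hj), mem_univ j⟩
  split_ifs with hjS
  · simpa [S] using hjS
  · have hij : (v i).1 < (v j).1 :=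
      lt_of_le_of_ne (not_lt.1 (by simpa [S] using hjS)) (hinj.ne hji.symm)
    exact ⟨hij, hc j hij.le⟩

lemma measurableSet_rankEvent : MeasurableSet (rankEvent t c i S) := by
  have hfst (j : Fin N) : Measurable fun v : Fin N → ℝ × ℝ => (v j).1 :=
    (measurable_pi_apply j).fst
  have hsnd (j : Fin N) : Measurable fun v : Fin N → ℝ × ℝ => (v j).2 :=
    (measurable_pi_apply j).snd
  simp only [rankEvent, Set.ofPred_and, Set.ofPred_forall]
  refine ((measurableSet_lt measurable_const (hfst i)).inter
    (measurableSet_lt measurable_const (hsnd i))).inter (.iInter fun j => .iInter fun _ => ?_)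
  split_ifs
  · exact measurableSet_lt (hfst j) (hfst i)
  · exact (measurableSet_lt (hfst i) (hfst j)).inter (measurableSet_lt measurable_const (hsnd j))

end RankEvent

section ProductMeasure

lemma card_filter_succAbove_mem {m : ℕ} {i : Fin (m + 1)} {S : Finset (Fin (m + 1))}
    (hiS : i ∉ S) : #{j : Fin m | i.succAbove j ∈ S} = #S := by
  rw [← card_map i.succAboveEmb]
  congr 1
  ext k
  simp only [mem_map, mem_filter, mem_univ, true_and, Fin.succAboveEmb_apply]
  refine ⟨fun ⟨j, hj, hjk⟩ => hjk ▸ hj, fun hk => ?_⟩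
  obtain ⟨j, rfl⟩ := Fin.exists_succAbove_eq (x := k) (y := i) (fun h => hiS (h ▸ hk))
  exact ⟨j, hk, rfl⟩

lemma pi_setOf_succAbove {α : Type*} [MeasurableSpace α] (μ : Measure α) [SigmaFinite μ]
    {m : ℕ} (i : Fin (m + 1)) {A : Set α} (hA : MeasurableSet A) {B : Fin m → Set (α × α)}
    (hB : ∀ j, MeasurableSet (B j)) :
    Measure.pi (fun _ => μ) {v | v i ∈ A ∧ ∀ j, (v i, v (i.succAbove j)) ∈ B j}
      = ∫⁻ p in A, ∏ j, μ (Prod.mk p ⁻¹' B j) ∂μ := by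
  set s : Set (α × (Fin m → α)) := Prod.fst ⁻¹' A ∩ ⋂ j, (fun q => (q.1, q.2 j)) ⁻¹' B j
  have hs : MeasurableSet s := (measurable_fst hA).inter <| .iInter fun j =>
    measurable_fst.prodMk ((measurable_pi_apply j).comp measurable_snd) (hB j)
  have hpre : {v : Fin (m + 1) → α | v i ∈ A ∧ ∀ j, (v i, v (i.succAbove j)) ∈ B j}
      = MeasurableEquiv.piFinSuccAbove (fun _ => α) i ⁻¹' s := by
    ext v
    simp [s, MeasurableEquiv.piFinSuccAbove_apply, Fin.removeNth]
  rw [hpre, (measurePreserving_piFinSuccAbove (fun _ => μ) i).measure_preimage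
    hs.nullMeasurableSet, Measure.prod_apply hs, ← lintegral_indicator hA]
  refine lintegral_congr fun p => ?_
  by_cases hp : p ∈ A
  · have hslice : Prod.mk p ⁻¹' s = Set.univ.pi fun j => Prod.mk p ⁻¹' B j := by
      ext w
      simp [s, hp]
    rw [Set.indicator_of_mem hp, hslice, Measure.pi_pi]
  · have hslice : Prod.mk p ⁻¹' s = ∅ := by
      ext w
      simp [s, hp]
    rw [Set.indicator_of_notMem hp, hslice, measure_empty]

lemma pi_rankEvent (ν : Measure (ℝ × ℝ)) [SigmaFinite ν] {m : ℕ} (t c : ℝ) {i : Fin (m + 1)}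
    {S : Finset (Fin (m + 1))} (hiS : i ∉ S) :
    Measure.pi (fun _ => ν) (rankEvent t c i S)
      = ∫⁻ p in Set.Ioi t ×ˢ Set.Ioi c,
          ν {q | q.1 < p.1} ^ #S * ν {q | p.1 < q.1 ∧ c < q.2} ^ (m - #S) ∂ν := by
  let B : Fin m → Set ((ℝ × ℝ) × (ℝ × ℝ)) := fun j =>
    {q | if i.succAbove j ∈ S then q.2.1 < q.1.1 else q.1.1 < q.2.1 ∧ c < q.2.2}
  have hB (j : Fin m) : MeasurableSet (B j) := by
    simp only [B]
    split_ifs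
    · exact measurableSet_lt measurable_snd.fst measurable_fst.fst
    · exact (measurableSet_lt measurable_fst.fst measurable_snd.fst).inter
        (measurableSet_lt measurable_const measurable_snd.snd)
  have hevent : rankEvent t c i S
      = {v | v i ∈ Set.Ioi t ×ˢ Set.Ioi c ∧ ∀ j, (v i, v (i.succAbove j)) ∈ B j} := by
    ext v
    simp only [rankEvent, Set.mem_ofPred_eq, Set.mem_prod, Set.mem_Ioi, B]
    rw [Fin.forall_iff_succAbove i]
    simp [Fin.succAbove_ne]
  have hslice (p : ℝ × ℝ) (j : Fin m) : ν (Prod.mk p ⁻¹' B j)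
      = if i.succAbove j ∈ S then ν {q | q.1 < p.1} else ν {q | p.1 < q.1 ∧ c < q.2} := by
    simp only [B]
    split_ifs <;> rfl
  have hcompl : #{j : Fin m | i.succAbove j ∉ S} = m - #S := by
    have := card_filter_add_card_filter_not (s := (univ : Finset (Fin m)))
      (p := fun j => i.succAbove j ∈ S)
    rw [card_filter_succAbove_mem hiS, card_univ, Fintype.card_fin] at this
    omega
  rw [hevent, pi_setOf_succAbove ν i (measurableSet_Ioi.prod measurableSet_Ioi) hB]
  simp only [hslice, prod_ite, prod_const, card_filter_succAbove_mem hiS, hcompl]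

end ProductMeasure

section Ties

lemma ProbabilityTheory.IndepFun.measure_setOf_eq_eq_zero {Ω α : Type*} [MeasurableSpace Ω]
    [MeasurableSpace α] [MeasurableEq α] {μ : Measure Ω} [IsFiniteMeasure μ] {X Y : Ω → α}
    (hX : Measurable X) (hY : Measurable Y) (hXY : IndepFun X Y μ)
    [NullSingletonClass (μ.map Y)] :
    μ {ω | X ω = Y ω} = 0 := by
  have hdiag : MeasurableSet {p : α × α | p.1 = p.2} :=
    measurableSet_eq_fun measurable_fst measurable_snd
  rw [show {ω | X ω = Y ω} = (fun ω => (X ω, Y ω)) ⁻¹' {p : α × α | p.1 = p.2} from rfl,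
    ← Measure.map_apply (hX.prodMk hY) hdiag,
    (indepFun_iff_map_prod_eq_prod_map_map hX.aemeasurable hY.aemeasurable).1 hXY,
    Measure.prod_apply hdiag]
  have hslice (x : α) : Prod.mk x ⁻¹' {p : α × α | p.1 = p.2} = {x} := by
    ext y
    simp [eq_comm]
  simp [hslice]

lemma nullSingletonClass_map_fst_of_absolutelyContinuous {α β : Type*} [MeasurableSpace α]
    [MeasurableSingletonClass α] [MeasurableSpace β] {μa : Measure α} [NullSingletonClass μa]
    {μb : Measure β} [SFinite μb] {ν : Measure (α × β)} (hν : ν ≪ μa.prod μb) :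
    NullSingletonClass (ν.map Prod.fst) := by
  refine ⟨fun x => ?_⟩
  rw [Measure.map_apply measurable_fst (measurableSet_singleton x)]
  refine hν ?_
  rw [show Prod.fst ⁻¹' {x} = {x} ×ˢ (Set.univ : Set β) by ext; simp, Measure.prod_prod,
    measure_singleton, zero_mul]

lemma pi_setOf_not_injective_fst {α β : Type*} [MeasurableSpace α] [MeasurableEq α]
    [MeasurableSpace β] (ν : Measure (α × β)) [IsProbabilityMeasure ν]
    [NullSingletonClass (ν.map Prod.fst)] {ι : Type*} [Fintype ι] :
    Measure.pi (fun _ : ι => ν) {v | ¬ Function.Injective fun j => (v j).1} = 0 := by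
  have hindep : iIndepFun (fun j (v : ι → α × β) => (v j).1) (Measure.pi fun _ => ν) :=
    iIndepFun_pi fun _ => measurable_fst.aemeasurable
  have hlaw (k : ι) : (Measure.pi fun _ => ν).map (fun v => (v k).1) = ν.map Prod.fst := by
    conv_rhs => rw [← (measurePreserving_eval (fun _ : ι => ν) k).map_eq,
      Measure.map_map measurable_fst (measurable_pi_apply k)]
    rfl
  have hties : {v : ι → α × β | ¬ Function.Injective fun j => (v j).1}
      = ⋃ j, ⋃ k, ⋃ (_ : j ≠ k), {v | (v j).1 = (v k).1} := by
    ext v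
    simp [Function.Injective, and_comm]
  rw [hties]
  refine measure_iUnion_null fun j => measure_iUnion_null fun k =>
    measure_iUnion_null fun hjk => ?_
  have : NullSingletonClass ((Measure.pi fun _ => ν).map fun v => (v k).1) := hlaw k ▸ inferInstance
  exact (hindep.indepFun hjk).measure_setOf_eq_eq_zero (measurable_pi_apply j).fst
    (measurable_pi_apply k).fst

end Ties

section OrderStatEvent

variable (ν : Measure (ℝ × ℝ)) [IsProbabilityMeasure ν] [NullSingletonClass (ν.map Prod.fst)]
  {N r : ℕ} (t c : ℝ)

lemma orderStatEvent_ae_eq_iUnion_rankEvent (hr : 1 ≤ r) (hrN : r ≤ N) :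
    (orderStatEvent r t c : Set (Fin N → ℝ × ℝ)) =ᵐ[Measure.pi fun _ => ν]
      ⋃ i, ⋃ S ∈ powersetCard (r - 1) (univ.erase i), rankEvent t c i S := by
  refine ae_eq_set.2 ⟨measure_mono_null (fun v hv => ?_) (pi_setOf_not_injective_fst ν), ?_⟩
  · exact ((orderStatEvent_subset hr hrN hv.1).resolve_left hv.2 :)
  · refine Set.sdiff_eq_empty.2 (Set.iUnion₂_subset fun i S => Set.iUnion_subset fun hS => ?_)
      ▸ measure_empty
    simp only [mem_powersetCard, subset_erase] at hS
    simpa [hS.2, Nat.sub_add_cancel hr] using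
      rankEvent_subset_orderStatEvent hS.1.2 (t := t) (c := c)

lemma nullMeasurableSet_orderStatEvent (hr : 1 ≤ r) (hrN : r ≤ N) :
    NullMeasurableSet (orderStatEvent r t c : Set (Fin N → ℝ × ℝ)) (Measure.pi fun _ => ν) :=
  (MeasurableSet.iUnion fun _ => measurableSet_biUnion _ fun _ _ =>
    measurableSet_rankEvent).nullMeasurableSet.congr
      (orderStatEvent_ae_eq_iUnion_rankEvent ν t c hr hrN).symm

theorem pi_orderStatEvent (hr : 1 ≤ r) (hrN : r ≤ N) :
    Measure.pi (fun _ : Fin N => ν) (orderStatEvent r t c)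
      = (N * (N - 1).choose (r - 1) : ℕ) * ∫⁻ p in Set.Ioi t ×ˢ Set.Ioi c,
          ν {q | q.1 < p.1} ^ (r - 1) * ν {q | p.1 < q.1 ∧ c < q.2} ^ (N - r) ∂ν := by
  rw [measure_congr (orderStatEvent_ae_eq_iUnion_rankEvent ν t c hr hrN)]
  obtain ⟨m, rfl⟩ : ∃ m, N = m + 1 := ⟨N - 1, by omega⟩
  have hpiece {i : Fin (m + 1)} {S} (hS : S ∈ powersetCard (r - 1) (univ.erase i)) :
      i ∉ S ∧ #S = r - 1 := by
    simpa [mem_powersetCard, subset_erase] using hS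
  have hdisj (i : Fin (m + 1)) :
      (powersetCard (r - 1) (univ.erase i) : Set (Finset (Fin (m + 1)))).PairwiseDisjoint
        (rankEvent t c i) := fun S hS S' hS' hne =>
    disjoint_rankEvent (hpiece hS).1 (hpiece hS').1 ((hpiece hS).2.trans (hpiece hS').2.symm)
      (by simpa using hne)
  have hdisj' : Pairwise (Function.onFun Disjoint
      fun i : Fin (m + 1) => ⋃ S ∈ powersetCard (r - 1) (univ.erase i), rankEvent t c i S) := by
    intro i i' hne
    simp only [Function.onFun, Set.disjoint_iUnion₂_left, Set.disjoint_iUnion₂_right]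
    exact fun S hS S' hS' => disjoint_rankEvent (hpiece hS').1 (hpiece hS).1
      ((hpiece hS').2.trans (hpiece hS).2.symm) (by simp [hne])
  rw [measure_iUnion hdisj' fun i => measurableSet_biUnion _ fun S _ => measurableSet_rankEvent,
    tsum_fintype]
  simp_rw [measure_biUnion_finset (hdisj _) fun S _ => measurableSet_rankEvent]
  have hpiece_measure {i : Fin (m + 1)} {S} (hS : S ∈ powersetCard (r - 1) (univ.erase i)) :
      Measure.pi (fun _ => ν) (rankEvent t c i S) = ∫⁻ p in Set.Ioi t ×ˢ Set.Ioi c,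
        ν {q | q.1 < p.1} ^ (r - 1) * ν {q | p.1 < q.1 ∧ c < q.2} ^ (m + 1 - r) ∂ν := by
    rw [pi_rankEvent ν t c (hpiece hS).1, (hpiece hS).2, show m - (r - 1) = m + 1 - r by omega]
  refine (sum_congr rfl fun i _ => sum_congr rfl fun S hS => hpiece_measure (i := i) hS).trans ?_
  simp [mul_assoc]

end OrderStatEvent

lemma measurePreserving_pi_of_iIndepFun {Ω ι β : Type*} [MeasurableSpace Ω] [MeasurableSpace β]
    [Fintype ι] {μ : Measure Ω} [IsProbabilityMeasure μ] {Y : ι → Ω → β}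
    (hY : ∀ i, Measurable (Y i)) (hindep : iIndepFun Y μ) {ν : Measure β} [SigmaFinite ν]
    (hlaw : ∀ i, μ.map (Y i) = ν) :
    MeasurePreserving (fun ω i => Y i ω) μ (Measure.pi fun _ => ν) :=
  ⟨measurable_pi_lambda _ hY,
    (hindep.map_fun_eq_pi_map fun i => (hY i).aemeasurable).trans (by simp_rw [hlaw])⟩

lemma measurable_cdf_pow_mul_survival_pow (ν : Measure (ℝ × ℝ)) (c : ℝ) (a b : ℕ) :
    Measurable fun x => ν {q | q.1 < x} ^ a * ν {q | x < q.1 ∧ c < q.2} ^ b := by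
  have hF : Monotone fun x => ν {q | q.1 < x} :=
    fun x y hxy => measure_mono fun q (hq : q.1 < x) => hq.trans_le hxy
  have hG : Antitone fun x => ν {q | x < q.1 ∧ c < q.2} :=
    fun x y hxy => measure_mono fun q (hq : y < q.1 ∧ _) => ⟨hxy.trans_lt hq.1, hq.2⟩
  exact (hF.measurable.pow_const a).mul (hG.measurable.pow_const b)

lemma toReal_setLIntegral_withDensity_eq_integral_integral {f : ℝ → ℝ → ℝ}
    (hf_nonneg : ∀ x y, 0 ≤ f x y) (hf_meas : Measurable (Function.uncurry f))
    [IsFiniteMeasure (volume.withDensity fun p : ℝ × ℝ => ENNReal.ofReal (f p.1 p.2))]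
    {g : ℝ → ENNReal}
    (hg : Measurable g) (hg1 : ∀ x, g x ≤ 1) {s u : Set ℝ} (hs : MeasurableSet s)
    (hu : MeasurableSet u) :
    (∫⁻ p in s ×ˢ u, g p.1 ∂(volume.withDensity fun p => ENNReal.ofReal (f p.1 p.2))).toReal
      = ∫ y in u, ∫ x in s, (g x).toReal * f x y := by
  have hnonneg (p : ℝ × ℝ) : 0 ≤ (g p.1).toReal * f p.1 p.2 :=
    mul_nonneg ENNReal.toReal_nonneg (hf_nonneg _ _)
  have hg_fst : Measurable fun p : ℝ × ℝ => g p.1 := hg.comp measurable_fst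
  have hmeas : Measurable fun p : ℝ × ℝ => (g p.1).toReal * f p.1 p.2 :=
    hg_fst.ennreal_toReal.mul hf_meas
  have hf_fin : ∫⁻ p : ℝ × ℝ, ENNReal.ofReal (f p.1 p.2) ≠ ⊤ := by
    rw [← setLIntegral_univ, ← withDensity_apply _ .univ]
    exact measure_ne_top _ _
  have hint : Integrable (fun p : ℝ × ℝ => (g p.1).toReal * f p.1 p.2) := by
    refine Integrable.mono' (g := Function.uncurry f) ⟨hf_meas.aestronglyMeasurable,
      (hasFiniteIntegral_iff_ofReal (ae_of_all _ fun p => hf_nonneg _ _)).2 hf_fin.lt_top⟩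
      hmeas.aestronglyMeasurable (ae_of_all _ fun p => ?_)
    rw [Real.norm_of_nonneg (hnonneg p)]
    exact mul_le_of_le_one_left (hf_nonneg _ _) (ENNReal.toReal_le_of_le_ofReal zero_le_one
      (by simpa using hg1 p.1))
  calc _ = (∫⁻ p in s ×ˢ u, ENNReal.ofReal ((g p.1).toReal * f p.1 p.2)).toReal := by
        rw [setLIntegral_withDensity_eq_setLIntegral_mul _
          (f := fun p => ENNReal.ofReal (f p.1 p.2)) (g := fun p => g p.1)
          (ENNReal.measurable_ofReal.comp hf_meas) hg_fst (hs.prod hu)]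
        congr 1
        refine lintegral_congr fun p => ?_
        rw [ENNReal.ofReal_mul ENNReal.toReal_nonneg,
          ENNReal.ofReal_toReal ((hg1 _).trans_lt ENNReal.one_lt_top).ne, mul_comm]
        rfl
    _ = ∫ p in s ×ˢ u, (g p.1).toReal * f p.1 p.2 :=
        (integral_eq_lintegral_of_nonneg_ae (ae_of_all _ hnonneg)
          hmeas.aestronglyMeasurable).symm
    _ = _ := by
        rw [Measure.volume_eq_prod, ← Measure.prod_restrict, integral_prod_symm _
          (by rw [Measure.prod_restrict, ← Measure.volume_eq_prod]; exact hint.restrict)]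

/-- with time-dependent powers W_i(t) = W_i·φ(t), where φ : [0,∞) → (0,1] is
continuous, decreasing, φ(0) = 1 and φ(t) → 0 as t → ∞, for all t ≥ 0 and s ≥ 0:
Q(t,s) = P{X_{r:n} > t, W_{[r:n]}(t) > s, ..., W_{[n:n]}(t) > s}
       = P{X_{r:n} > t, W_{[r:n]} > s/φ(t), ..., W_{[n:n]} > s/φ(t)}
       = n·C(n-1,r-1)·∫_{s/φ(t)}^∞ ∫_t^∞ F_X(x)^{r-1}·[F̄_{X,W}(x,s/φ(t))]^{n-r}·f(x,y) dx dy.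
The event {X_{r:n} > t, W_{[r:n]}(t) > s, ...} is the event that X_{r:n} > t and every index i
with X_i ≥ X_{r:n} satisfies W_i·φ(t) > s. -/
theorem statement7
    {Ω : Type*} [MeasurableSpace Ω] (μ : Measure Ω) [IsProbabilityMeasure μ]
    (n r : ℕ) (hr : 1 ≤ r) (hrn : r ≤ n)
    (X W : Fin n → Ω → ℝ)
    (hXmeas : ∀ i, Measurable (X i)) (hWmeas : ∀ i, Measurable (W i))
    (f : ℝ → ℝ → ℝ) (hf_nonneg : ∀ x y, 0 ≤ f x y)
    (hf_meas : Measurable (Function.uncurry f))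
    (hindep : iIndepFun (fun i ω => (X i ω, W i ω)) μ)
    (hlaw : ∀ i, Measure.map (fun ω => (X i ω, W i ω)) μ =
      (volume : Measure (ℝ × ℝ)).withDensity (fun p => ENNReal.ofReal (f p.1 p.2)))
    (φ : ℝ → ℝ)
    (hφ_mem : ∀ u ∈ Set.Ici (0 : ℝ), φ u ∈ Set.Ioc (0 : ℝ) 1)
    (t s : ℝ) (ht : 0 ≤ t) :
    μ {ω | t < orderStat (fun i => X i ω) r ∧
        ∀ i, orderStat (fun j => X j ω) r ≤ X i ω → s < W i ω * φ t}
      = μ {ω | t < orderStat (fun i => X i ω) r ∧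
        ∀ i, orderStat (fun j => X j ω) r ≤ X i ω → s / φ t < W i ω}
    ∧ (μ {ω | t < orderStat (fun i => X i ω) r ∧
        ∀ i, orderStat (fun j => X j ω) r ≤ X i ω → s < W i ω * φ t}).toReal
      = (n : ℝ) * ((n - 1).choose (r - 1) : ℝ) *
        ∫ y in Set.Ioi (s / φ t), ∫ x in Set.Ioi t,
          (μ {ω | X ⟨0, by omega⟩ ω < x}).toReal ^ (r - 1) *
          (μ {ω | x < X ⟨0, by omega⟩ ω ∧ s / φ t < W ⟨0, by omega⟩ ω}).toReal ^ (n - r) *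
          f x y := by
  simp_rw [← div_lt_iff₀ (hφ_mem t ht).1]
  refine ⟨trivial, ?_⟩
  set ν := (volume : Measure (ℝ × ℝ)).withDensity fun p => ENNReal.ofReal (f p.1 p.2)
  set i₀ : Fin n := ⟨0, by omega⟩
  have hpair (i : Fin n) : Measurable fun ω => (X i ω, W i ω) := (hXmeas i).prodMk (hWmeas i)
  have : IsProbabilityMeasure ν :=
    hlaw i₀ ▸ Measure.isProbabilityMeasure_map (hpair i₀).aemeasurable
  have : NullSingletonClass (ν.map Prod.fst) :=
    nullSingletonClass_map_fst_of_absolutelyContinuous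
      (by rw [← Measure.volume_eq_prod]; exact withDensity_absolutelyContinuous _ _)
  have hlaw₀ : MeasurePreserving (fun ω => (X i₀ ω, W i₀ ω)) μ ν := ⟨hpair i₀, hlaw i₀⟩
  have hF (x : ℝ) : μ {ω | X i₀ ω < x} = ν {q | q.1 < x} :=
    hlaw₀.measure_preimage (measurableSet_lt measurable_fst measurable_const).nullMeasurableSet
  have hG (x : ℝ) : μ {ω | x < X i₀ ω ∧ s / φ t < W i₀ ω} = ν {q | x < q.1 ∧ s / φ t < q.2} :=
    hlaw₀.measure_preimage ((measurableSet_lt measurable_const measurable_fst).inter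
      (measurableSet_lt measurable_const measurable_snd)).nullMeasurableSet
  change (μ ((fun ω i => (X i ω, W i ω)) ⁻¹' orderStatEvent r t (s / φ t))).toReal = _
  rw [(measurePreserving_pi_of_iIndepFun hpair hindep hlaw).measure_preimage
      (nullMeasurableSet_orderStatEvent ν _ _ hr hrn),
    pi_orderStatEvent ν _ _ hr hrn, ENNReal.toReal_mul,
    toReal_setLIntegral_withDensity_eq_integral_integral hf_nonneg hf_meas
      (measurable_cdf_pow_mul_survival_pow ν _ _ _)
      (fun x => mul_le_one' (pow_le_one' prob_le_one _) (pow_le_one' prob_le_one _))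
      measurableSet_Ioi measurableSet_Ioi]
  simp [hF, hG, ENNReal.toReal_mul, ENNReal.toReal_pow]
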